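/- Consider the R-process with parameters r ≥ 2, ε ∈ [0,1], δ > 0 and γ = 1−(1+δ)/r. Let F' be an admissible strategy and U' = (C',S',B',I') an initial state, and let U = (C,S,B,I) be an initial state dominating U', i.e., S ≥ S', I ≥ I', and S+B+I−γrC ≥ S'+B'+I'−γrC'. Then there exists an admissible strategy F such that E[I_∞(U,F)] ≥ E[I_∞(U',F')]. -/

import Mathlib

open Finset Filter
open scoped ENNReal Classical

/-- State of the R-process: internal check nodes `C`, surviving edges `S`,
boundary variables `B`, internal variables `I`. -/
structure RState where
  C : ℤ
  S : ℤ
  B : ℤ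
  I : ℤ

/-- A (possibly randomized) strategy: at each step it sees the history of
past `(coin, aux)` pairs together with its current auxiliary random value
(drawn i.i.d. from `aux`), and decides whether to perform a boundary step
(`true`) or a regular step (`false`). -/
structure RStrategy where
  aux : PMF ℕ
  decide : List (Bool × ℕ) → ℕ → Bool

/-- One run of the R-process for `t` steps, driven by the stream `h` of
`(coin, aux)` pairs: the coin `true` means a regular step "extends"
(probability ε), `false` that it "prunes"; the process freezes once `S ≤ 0`. -/
def rstep (r : ℕ) (F : RStrategy) (U0 : RState) (h : ℕ → Bool × ℕ) : ℕ → RState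
  | 0 => U0
  | t + 1 =>
    let cur := rstep r F U0 h t
    if cur.S ≤ 0 then cur
    else if F.decide (List.ofFn fun i : Fin t => h i) (h t).2 then
      ⟨cur.C + 1, cur.S + ((r : ℤ) - 2), cur.B - 1, cur.I + 1⟩
    else if (h t).1 then
      ⟨cur.C + 2, cur.S + (2 * (r : ℤ) - 3), cur.B, cur.I + 1⟩
    else
      ⟨cur.C, cur.S - 1, cur.B + 1, cur.I⟩

/-- Admissibility of a strategy from initial state `U0`: along every possible
history the state always satisfies `γ r C ≤ S + B + I`. -/
def RAdmissible (r : ℕ) (γ : ℝ) (F : RStrategy) (U0 : RState) : Prop :=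
  ∀ (h : ℕ → Bool × ℕ) (t : ℕ),
    γ * r * ((rstep r F U0 h t).C : ℝ) ≤
      ((rstep r F U0 h t).S : ℝ) + ((rstep r F U0 h t).B : ℝ) +
        ((rstep r F U0 h t).I : ℝ)

/-- Product of `k` independent copies of a PMF. -/
noncomputable def pmfPi {α : Type} (p : PMF α) : (k : ℕ) → PMF (Fin k → α)
  | 0 => PMF.pure fun i => i.elim0
  | k + 1 => p.bind fun x => (pmfPi p k).map (Fin.cons x)

/-- Bernoulli PMF on `Bool` with success probability `ε` (clipped to `[0,1]`). -/
noncomputable def bern (ε : ℝ) : PMF Bool :=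
  PMF.bernoulli (min (Real.toNNReal ε) 1) (min_le_right _ _)

/-- Distribution of one `(coin, aux)` pair: an independent Bernoulli(ε) coin
and an auxiliary value with law `ν`. -/
noncomputable def coinPMF (ε : ℝ) (ν : PMF ℕ) : PMF (Bool × ℕ) :=
  (bern ε).bind fun c => ν.map fun u => (c, u)

/-- Extend a finite tuple to an infinite stream by a default value. -/
def extendFin {α : Type} (d : α) {t : ℕ} (hf : Fin t → α) : ℕ → α :=
  fun i => if h : i < t then hf ⟨i, h⟩ else d

/-- Expected total increase `E[I_∞ - I_0]` of the `I`-component of the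
R-process started at `U0` under strategy `F` (the increments of `I` are
nonnegative, so this is the monotone limit of the finite-horizon
expectations). -/
noncomputable def EIinc (r : ℕ) (ε : ℝ) (F : RStrategy) (U0 : RState) : ℝ≥0∞ :=
  ⨆ t : ℕ, ∑' hf : Fin t → Bool × ℕ,
    pmfPi (coinPMF ε F.aux) t hf *
      (((rstep r F U0 (extendFin (false, 0) hf) t).I - U0.I).toNat : ℝ≥0∞)

/-- One step of the greedy replay used to define the greedy strategy. -/
noncomputable def greedyStep (r : ℕ) (δ : ℝ) (st : RState) (x : Bool × ℕ) : RState :=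
  if st.S ≤ 0 then st
  else if (1 - (1 + δ) / r) * r * (st.C : ℝ) ≤
      (st.S : ℝ) + (st.B : ℝ) + (st.I : ℝ) - (1 - δ) then
    ⟨st.C + 1, st.S + ((r : ℤ) - 2), st.B - 1, st.I + 1⟩
  else if x.1 then
    ⟨st.C + 2, st.S + (2 * (r : ℤ) - 3), st.B, st.I + 1⟩
  else
    ⟨st.C, st.S - 1, st.B + 1, st.I⟩

/-- The greedy strategy `F^g` (for `γ = 1 - (1+δ)/r`): perform a boundary step
exactly when `γ r C ≤ S + B + I - (1-δ)` holds for the current state (which it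
recomputes by replaying the history). -/
noncomputable def greedy (r : ℕ) (δ : ℝ) (U0 : RState) : RStrategy where
  aux := PMF.pure 0
  decide hist _ :=
    let st := hist.foldl (greedyStep r δ) U0
    if (1 - (1 + δ) / r) * r * (st.C : ℝ) ≤
        (st.S : ℝ) + (st.B : ℝ) + (st.I : ℝ) - (1 - δ) then true else false

/-! Couple the two processes on the same stream of coins. The strategy `mimic` copies the
decisions of `F'` while the `F'`-process from `U'` is alive; as long as this lasts, the two
states differ by the constant vector `U - U'`, whose `S`-entry is nonnegative, so the copy
is alive too. Once the `F'`-process has stopped, `mimic` performs only regular steps, and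
these decrease neither `I` nor the slack `S + B + I - γ r C`, because an extension changes
the slack by `2 (r - 1 - γ r) = 2 δ ≥ 0` and a pruning leaves it unchanged. -/

namespace RState

instance : Add RState := ⟨fun X Y => ⟨X.C + Y.C, X.S + Y.S, X.B + Y.B, X.I + Y.I⟩⟩

instance : Sub RState := ⟨fun X Y => ⟨X.C - Y.C, X.S - Y.S, X.B - Y.B, X.I - Y.I⟩⟩

@[simp] lemma add_C (X Y : RState) : (X + Y).C = X.C + Y.C := rfl
@[simp] lemma add_S (X Y : RState) : (X + Y).S = X.S + Y.S := rfl
@[simp] lemma add_B (X Y : RState) : (X + Y).B = X.B + Y.B := rfl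
@[simp] lemma add_I (X Y : RState) : (X + Y).I = X.I + Y.I := rfl
@[simp] lemma sub_C (X Y : RState) : (X - Y).C = X.C - Y.C := rfl
@[simp] lemma sub_S (X Y : RState) : (X - Y).S = X.S - Y.S := rfl
@[simp] lemma sub_B (X Y : RState) : (X - Y).B = X.B - Y.B := rfl
@[simp] lemma sub_I (X Y : RState) : (X - Y).I = X.I - Y.I := rfl

def move (r : ℕ) (boundary extend : Bool) (X : RState) : RState :=
  if boundary then ⟨X.C + 1, X.S + ((r : ℤ) - 2), X.B - 1, X.I + 1⟩
  else if extend then ⟨X.C + 2, X.S + (2 * (r : ℤ) - 3), X.B, X.I + 1⟩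
  else ⟨X.C, X.S - 1, X.B + 1, X.I⟩

lemma add_move (r : ℕ) (boundary extend : Bool) (X D : RState) :
    (X + D).move r boundary extend = X.move r boundary extend + D := by
  cases boundary <;> cases extend <;> simp only [move, Bool.false_eq_true, if_true, if_false] <;>
    congr 1 <;> simp only [add_C, add_S, add_B, add_I] <;> ring

lemma I_le_move_I (r : ℕ) (boundary extend : Bool) (X : RState) :
    X.I ≤ (X.move r boundary extend).I := by
  cases boundary <;> cases extend <;> simp [move]

def slack (r : ℕ) (γ : ℝ) (X : RState) : ℝ := X.S + X.B + X.I - γ * r * X.C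

lemma slack_add (r : ℕ) (γ : ℝ) (X Y : RState) : slack r γ (X + Y) = slack r γ X + slack r γ Y := by
  simp only [slack, add_C, add_S, add_B, add_I]; push_cast; ring

lemma slack_sub (r : ℕ) (γ : ℝ) (X Y : RState) : slack r γ (X - Y) = slack r γ X - slack r γ Y := by
  simp only [slack, sub_C, sub_S, sub_B, sub_I]; push_cast; ring

lemma slack_le_slack_move_regular {r : ℕ} {γ : ℝ} (hγ : γ * r ≤ r - 1) (extend : Bool)
    (X : RState) : slack r γ X ≤ slack r γ (X.move r false extend) := by
  cases extend <;> simp only [slack, move, Bool.false_eq_true, if_false, if_true] <;> push_cast <;>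
    linarith

end RState

open RState

lemma rstep_succ (r : ℕ) (F : RStrategy) (U0 : RState) (h : ℕ → Bool × ℕ) (t : ℕ) :
    rstep r F U0 h (t + 1) =
      if (rstep r F U0 h t).S ≤ 0 then rstep r F U0 h t
      else (rstep r F U0 h t).move r (F.decide (List.ofFn fun i : Fin t => h i) (h t).2)
        (h t).1 :=
  rfl

lemma rstep_congr (r : ℕ) (F : RStrategy) (U0 : RState) {h h' : ℕ → Bool × ℕ} {t : ℕ}
    (hh : ∀ i < t, h i = h' i) : rstep r F U0 h t = rstep r F U0 h' t := by
  induction t with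
  | zero => rfl
  | succ t ih =>
    have hofn : (List.ofFn fun i : Fin t => h i) = List.ofFn fun i : Fin t => h' i :=
      congrArg List.ofFn (funext fun i => hh i (by omega))
    rw [rstep_succ, rstep_succ, ih fun i hi => hh i (by omega), hofn, hh t (by omega)]

lemma admissible_iff_slack_nonneg (r : ℕ) (γ : ℝ) (F : RStrategy) (U0 : RState) :
    RAdmissible r γ F U0 ↔ ∀ h t, 0 ≤ slack r γ (rstep r F U0 h t) := by
  simp only [RAdmissible, slack, sub_nonneg]

def mimic (r : ℕ) (F' : RStrategy) (U' : RState) : RStrategy where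
  aux := F'.aux
  decide hist u :=
    if (rstep r F' U' (fun i => hist.getD i (false, 0)) hist.length).S ≤ 0 then false
    else F'.decide hist u

lemma mimic_decide (r : ℕ) (F' : RStrategy) (U' : RState) (h : ℕ → Bool × ℕ) (t u : ℕ) :
    (mimic r F' U').decide (List.ofFn fun i : Fin t => h i) u =
      if (rstep r F' U' h t).S ≤ 0 then false
      else F'.decide (List.ofFn fun i : Fin t => h i) u := by
  have hreplay : rstep r F' U' (fun i => (List.ofFn fun i : Fin t => h i).getD i (false, 0))
      (List.ofFn fun i : Fin t => h i).length = rstep r F' U' h t := by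
    rw [List.length_ofFn]
    exact rstep_congr r F' U' fun i hi => by simp [hi]
  simp only [mimic, hreplay]

def RegularStep (r : ℕ) (X Y : RState) : Prop := ∃ extend, Y = X.move r false extend

lemma RegularStep.monotone_of_reflTransGen {r : ℕ} {β : Type*} [Preorder β] {f : RState → β}
    (hf : ∀ X Y, RegularStep r X Y → f X ≤ f Y) {X Y : RState}
    (hXY : Relation.ReflTransGen (RegularStep r) X Y) : f X ≤ f Y := by
  simpa only [Relation.reflTransGen_eq_self] using hXY.lift f hf

def Coupled (r : ℕ) (D X' X : RState) : Prop :=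
  X = X' + D ∨ (X'.S ≤ 0 ∧ Relation.ReflTransGen (RegularStep r) (X' + D) X)

lemma Coupled.reflTransGen {r : ℕ} {D X' X : RState} (hc : Coupled r D X' X) :
    Relation.ReflTransGen (RegularStep r) (X' + D) X := by
  rcases hc with rfl | ⟨-, hreach⟩
  exacts [.refl, hreach]

lemma Coupled.I_le {r : ℕ} {D X' X : RState} (hc : Coupled r D X' X) : X'.I + D.I ≤ X.I :=
  RegularStep.monotone_of_reflTransGen (f := RState.I)
    (fun _ _ ⟨_, hY⟩ => hY ▸ I_le_move_I r false _ _) hc.reflTransGen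

lemma Coupled.slack_le {r : ℕ} {γ : ℝ} (hγ : γ * r ≤ r - 1) {D X' X : RState}
    (hc : Coupled r D X' X) : slack r γ X' + slack r γ D ≤ slack r γ X := by
  rw [← slack_add]
  exact RegularStep.monotone_of_reflTransGen
    (fun _ _ ⟨_, hY⟩ => hY ▸ slack_le_slack_move_regular hγ _ _) hc.reflTransGen

lemma coupled_mimic (r : ℕ) (F' : RStrategy) {U U' : RState} (hS : U'.S ≤ U.S)
    (h : ℕ → Bool × ℕ) (t : ℕ) :
    Coupled r (U - U') (rstep r F' U' h t) (rstep r (mimic r F' U') U h t) := by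
  induction t with
  | zero => left; cases U; cases U'; simp only [rstep]; congr 1 <;> simp
  | succ t ih =>
    rw [rstep_succ, rstep_succ, mimic_decide]
    set X' := rstep r F' U' h t
    set X := rstep r (mimic r F' U') U h t
    by_cases hdead : X'.S ≤ 0
    · simp only [hdead, if_true]
      refine Or.inr ⟨hdead, ?_⟩
      split_ifs
      exacts [ih.reflTransGen, ih.reflTransGen.tail ⟨_, rfl⟩]
    · have hX : X = X' + (U - U') := by
        rcases ih with hX | ⟨hdead', -⟩
        exacts [hX, absurd hdead' hdead]
      have halive : ¬ X.S ≤ 0 := by rw [hX]; simp only [add_S, sub_S]; omega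
      simp only [hdead, halive, if_false]
      exact Or.inl (hX ▸ add_move r _ _ X' (U - U'))

lemma admissible_mimic {r : ℕ} {γ : ℝ} (hγ : γ * r ≤ r - 1) {F' : RStrategy} {U U' : RState}
    (hadm' : RAdmissible r γ F' U') (hS : U'.S ≤ U.S) (hslack : slack r γ U' ≤ slack r γ U) :
    RAdmissible r γ (mimic r F' U') U := by
  rw [admissible_iff_slack_nonneg] at hadm' ⊢
  intro h t
  have hcoupled := (coupled_mimic r F' hS h t).slack_le hγ
  rw [slack_sub] at hcoupled
  linarith [hadm' h t]

lemma EIinc_le_EIinc_mimic (r : ℕ) (ε : ℝ) (F' : RStrategy) {U U' : RState}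
    (hS : U'.S ≤ U.S) :
    EIinc r ε F' U' ≤ EIinc r ε (mimic r F' U') U := by
  refine iSup_mono fun t => ENNReal.tsum_le_tsum fun hf => mul_le_mul_right ?_ _
  have hI := (coupled_mimic r F' hS (extendFin (false, 0) hf) t).I_le
  rw [sub_I] at hI
  exact_mod_cast Int.toNat_le_toNat (by omega)

theorem stmt10_general (r : ℕ) (hr : 2 ≤ r) (ε : ℝ)
    (δ : ℝ) (hδ : 0 < δ) (γ : ℝ) (hγ : γ = 1 - (1 + δ) / r)
    (F' : RStrategy) (U U' : RState)
    (hadm' : RAdmissible r γ F' U')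
    (hS : U'.S ≤ U.S) (hI : U'.I ≤ U.I)
    (hdom : (U'.S : ℝ) + (U'.B : ℝ) + (U'.I : ℝ) - γ * r * (U'.C : ℝ) ≤
      (U.S : ℝ) + (U.B : ℝ) + (U.I : ℝ) - γ * r * (U.C : ℝ)) :
    ∃ F : RStrategy, RAdmissible r γ F U ∧
      (((U'.I : ℝ) : EReal) + (EIinc r ε F' U' : EReal)) ≤
        (((U.I : ℝ) : EReal) + (EIinc r ε F U : EReal)) := by
  have hγr : γ * r ≤ r - 1 := by
    have hr0 : (r : ℝ) ≠ 0 := by positivity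
    have : γ * r = r - 1 - δ := by rw [hγ]; field_simp; ring
    linarith
  refine ⟨mimic r F' U', admissible_mimic hγr hadm' hS hdom, add_le_add ?_ ?_⟩
  · exact_mod_cast hI
  · exact_mod_cast EIinc_le_EIinc_mimic r ε F' hS

/-- monotonicity of `E[I_∞]` with respect to domination of the
initial state.  If `U` dominates `U'` (componentwise in `S` and `I`, and in
the slack `S+B+I-γrC`), then for any admissible strategy `F'` from `U'` there
is an admissible strategy `F` from `U` with
`E[I_∞(U,F)] ≥ E[I_∞(U',F')]` (stated in `EReal`, adding the fixed initial
values `I` to the expected nonnegative increments). -/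
theorem stmt10 (r : ℕ) (hr : 2 ≤ r) (ε : ℝ) (hε0 : 0 ≤ ε) (hε1 : ε ≤ 1)
    (δ : ℝ) (hδ : 0 < δ) (γ : ℝ) (hγ : γ = 1 - (1 + δ) / r)
    (F' : RStrategy) (U U' : RState)
    (hadm' : RAdmissible r γ F' U')
    (hS : U'.S ≤ U.S) (hI : U'.I ≤ U.I)
    (hdom : (U'.S : ℝ) + (U'.B : ℝ) + (U'.I : ℝ) - γ * r * (U'.C : ℝ) ≤
      (U.S : ℝ) + (U.B : ℝ) + (U.I : ℝ) - γ * r * (U.C : ℝ)) :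
    ∃ F : RStrategy, RAdmissible r γ F U ∧
      (((U'.I : ℝ) : EReal) + (EIinc r ε F' U' : EReal)) ≤
        (((U.I : ℝ) : EReal) + (EIinc r ε F U : EReal)) :=
  stmt10_general r hr ε δ hδ γ hγ F' U U' hadm' hS hI hdom
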